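/- arXiv:1209.2678 — 2 statements merged into one kernel-verified Lean document; each statement's English description precedes it below -/
import Mathlib

section
/- For all integers K ≥ 1 and N₁,N₂ ≥ 5, the Newman modularity of the natural clustering of H_{K,N₁,N₂} satisfies Q_N(𝐕_{K,N₁,N₂}, H_{K,N₁,N₂}) < 1 − K((4N₁−8)² + (4N₂−8)²)/(4K(N₁+N₂−2))². -/
open scoped Classical

noncomputable section

namespace BadComm

variable {V : Type*} [Fintype V]

/-- The finset of edges of a simple graph `G`. -/
def edgeFin (G : SimpleGraph V) : Finset (Sym2 V) :=
  Finset.univ.filter (fun e => e ∈ G.edgeSet)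

/-- The number of edges `m` of `G`. -/
def numEdges (G : SimpleGraph V) : ℕ := (edgeFin G).card

/-- The degree of a node. -/
def deg (G : SimpleGraph V) (v : V) : ℕ := (Finset.univ.filter (fun w => G.Adj v w)).card

/-- A clustering is encoded as a labelling `c : V → ℕ`; cluster `k` is the set of nodes
with label `k`.  `clusterDeg G c k` is the total degree of cluster `k`. -/
def clusterDeg (G : SimpleGraph V) (c : V → ℕ) (k : ℕ) : ℕ :=
  ∑ v ∈ Finset.univ.filter (fun v => c v = k), deg G v

/-- An unordered pair is intracluster when all of its members carry the same label. -/
def sameCluster (c : V → ℕ) (p : Sym2 V) : Prop :=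
  ∀ u ∈ p, ∀ v ∈ p, c u = c v

/-- The number of intracluster edges, `∑ₖ |Eₖ|`. -/
def intraEdges (G : SimpleGraph V) (c : V → ℕ) : ℕ :=
  ((edgeFin G).filter (fun e => sameCluster c e)).card

/-- The number of extracluster edges. -/
def extraEdges (G : SimpleGraph V) (c : V → ℕ) : ℕ :=
  ((edgeFin G).filter (fun e => ¬ sameCluster c e)).card

/-- The intracluster edge fraction `Q_f = (∑ₖ |Eₖ|)/m`. -/
def Qf (G : SimpleGraph V) (c : V → ℕ) : ℝ := (intraEdges G c : ℝ) / (numEdges G : ℝ)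

/-- The null-model term `Q_0 = ∑ₖ (deg(Vₖ)/(2m))²` (summed over the nonempty clusters). -/
def Q0 (G : SimpleGraph V) (c : V → ℕ) : ℝ :=
  ∑ k ∈ Finset.univ.image c, ((clusterDeg G c k : ℝ) / (2 * (numEdges G : ℝ))) ^ 2

/-- Newman's modularity `Q_N = Q_f - Q_0`. -/
def QN (G : SimpleGraph V) (c : V → ℕ) : ℝ := Qf G c - Q0 G c

/-- The number of (nonempty) clusters of a labelling. -/
def numClusters (c : V → ℕ) : ℕ := (Finset.univ.image c).card

/-- The unordered pairs of distinct nodes. -/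
def offDiagPairs (V : Type*) [Fintype V] : Finset (Sym2 V) :=
  Finset.univ.filter (fun p => ¬ p.IsDiag)

/-- Number of node pairs in the same cluster under both clusterings. -/
def a11 (c1 c2 : V → ℕ) : ℕ :=
  ((offDiagPairs V).filter (fun p => sameCluster c1 p ∧ sameCluster c2 p)).card

/-- Number of node pairs in the same cluster under `c1` but not under `c2`. -/
def a10 (c1 c2 : V → ℕ) : ℕ :=
  ((offDiagPairs V).filter (fun p => sameCluster c1 p ∧ ¬ sameCluster c2 p)).card

/-- Number of node pairs in the same cluster under `c2` but not under `c1`. -/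
def a01 (c1 c2 : V → ℕ) : ℕ :=
  ((offDiagPairs V).filter (fun p => ¬ sameCluster c1 p ∧ sameCluster c2 p)).card

/-- The Jaccard similarity index of two clusterings. -/
def jaccard (c1 c2 : V → ℕ) : ℝ :=
  (a11 c1 c2 : ℝ) / ((a10 c1 c2 : ℝ) + (a01 c1 c2 : ℝ) + (a11 c1 c2 : ℝ))

/-- Number of (unordered) node pairs lying in the same cluster. -/
def samePairCount (c : V → ℕ) : ℕ :=
  ((offDiagPairs V).filter (fun p => sameCluster c p)).card

/-- The nodes `0,…,n-1` are split into consecutive blocks of alternating sizes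
`N₁,N₂,N₁,N₂,…`; `blockIdx N1 N2 v` is the index of the block of node `v`. -/
def blockIdx (N1 N2 v : ℕ) : ℕ :=
  2 * (v / (N1 + N2)) + (if v % (N1 + N2) < N1 then 0 else 1)

/-- The graph `G_{K,N₁,N₂}`: a disjoint union of `K` paths on `N₁` nodes and `K` paths on
`N₂` nodes, arranged as alternating consecutive blocks of `{0,…,K(N₁+N₂)-1}`. -/
def graphG (K N1 N2 : ℕ) : SimpleGraph (Fin (K * (N1 + N2))) where
  Adj u v := (u.val + 1 = v.val ∨ v.val + 1 = u.val) ∧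
             blockIdx N1 N2 u.val = blockIdx N1 N2 v.val
  symm := by constructor; rintro u v ⟨h1, h2⟩; exact ⟨h1.symm, h2.symm⟩
  loopless := by constructor; rintro u ⟨h1 | h1, -⟩ <;> omega

/-- The connected graph `H_{K,N₁,N₂}`: the path on all of `{0,…,K(N₁+N₂)-1}` together with,
inside each block, all chords joining nodes of the block at distance two. -/
def graphH (K N1 N2 : ℕ) : SimpleGraph (Fin (K * (N1 + N2))) where
  Adj u v := (u.val + 1 = v.val ∨ v.val + 1 = u.val) ∨
             ((u.val + 2 = v.val ∨ v.val + 2 = u.val) ∧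
              blockIdx N1 N2 u.val = blockIdx N1 N2 v.val)
  symm := by
    constructor
    rintro u v (h1 | ⟨h2, h3⟩)
    · exact Or.inl h1.symm
    · exact Or.inr ⟨h2.symm, h3.symm⟩
  loopless := by constructor; rintro u ((h | h) | ⟨h | h, -⟩) <;> omega

/-- The natural clustering `𝐕_{K,N₁,N₂}`: the clusters are the `2K` blocks. -/
def naturalLabel (N1 N2 : ℕ) {n : ℕ} : Fin n → ℕ := fun v => blockIdx N1 N2 v.val

/-- The balanced clustering `𝐔_{K,N₁,N₂,J}` with `L = ⌊n/J⌋`: clusters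
`U_j = {(j-1)L+1,…,jL}` for `j = 1,…,J`, plus the remainder cluster `U_{J+1}`. -/
def uLabel (J : ℕ) {n : ℕ} : Fin n → ℕ := fun v => min (v.val / (n / J)) J

end BadComm

open BadComm


/-!
A block of `H` with `N` nodes contains `N - 1` path edges and `N - 2` chords, and is joined to
its neighbouring blocks by one or two path edges, so its total degree is
`4N - 6 + [it is not the first block] + [it is not the last block]`; this is read off from the
explicit degree of each node. Hence `deg(V_k) > 4N_k - 8`, while
`2m = ∑ₖ deg(V_k) < 4K(N₁ + N₂ - 2)`. Every term `(deg(V_k)/2m)²` of `Q_0` therefore exceeds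
`((4N_k - 8)/(4K(N₁ + N₂ - 2)))²`, and `Q_N = Q_f - Q_0 ≤ 1 - Q_0`.
-/

namespace BadComm

open Finset

section Modularity

variable {V : Type*} [Fintype V]

theorem sum_deg_eq_two_mul_numEdges (G : SimpleGraph V) :
    ∑ v, deg G v = 2 * numEdges G := by
  rw [numEdges, show edgeFin G = G.edgeFinset by ext; simp [edgeFin],
    ← SimpleGraph.sum_degrees_eq_twice_card_edges]
  refine sum_congr rfl fun v _ => ?_
  rw [deg, ← SimpleGraph.card_neighborFinset_eq_degree]
  congr 1
  ext w
  simp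

theorem sum_deg_eq_sum_clusterDeg (G : SimpleGraph V) {c : V → ℕ} {t : Finset ℕ}
    (hc : ∀ v, c v ∈ t) : ∑ v, deg G v = ∑ k ∈ t, clusterDeg G c k :=
  (sum_fiberwise_of_maps_to (fun v _ => hc v) _).symm

theorem clusterDeg_le_two_mul_numEdges (G : SimpleGraph V) (c : V → ℕ) (k : ℕ) :
    clusterDeg G c k ≤ 2 * numEdges G := by
  rw [← sum_deg_eq_two_mul_numEdges]
  exact sum_le_univ_sum_of_nonneg fun _ => Nat.zero_le _

theorem Qf_le_one (G : SimpleGraph V) (c : V → ℕ) : Qf G c ≤ 1 :=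
  div_le_one_of_le₀ (by exact_mod_cast card_filter_le _ _) (Nat.cast_nonneg _)

theorem sum_fin_ite_val_eq {n : ℕ} (a c : ℕ) :
    (∑ w : Fin n, if w.val = a then c else 0) = if a < n then c else 0 := by
  rw [Fin.sum_univ_eq_sum_range (fun w => if w = a then c else 0)]
  simp only [sum_ite_eq', mem_range]

theorem clusterDeg_eq_sum_filter_range {n : ℕ} (G : SimpleGraph (Fin n)) (b f : ℕ → ℕ)
    (hdeg : ∀ v, deg G v = f v) (k : ℕ) :
    clusterDeg G (fun v => b v) k = ∑ x ∈ (range n).filter (b · = k), f x := by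
  rw [clusterDeg, sum_filter, sum_filter,
    ← Fin.sum_univ_eq_sum_range (fun x => if b x = k then f x else 0)]
  simp only [hdeg]

end Modularity

theorem sum_range_add_four {M : Type*} [AddCommMonoid M] (g : ℕ → M) (m : ℕ) :
    ∑ i ∈ range (m + 4), g i =
      g 0 + g 1 + ∑ i ∈ range m, g (i + 2) + g (m + 2) + g (m + 3) := by
  rw [sum_range_succ, sum_range_succ, sum_range_succ', sum_range_succ']
  abel

section Blocks

variable {K N1 N2 : ℕ}

def blockStart (N1 N2 k : ℕ) : ℕ := k / 2 * (N1 + N2) + if k % 2 = 0 then 0 else N1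

def blockSize (N1 N2 k : ℕ) : ℕ := if k % 2 = 0 then N1 else N2

theorem blockIdx_eq_iff (hN : 0 < N1 + N2) {x k : ℕ} :
    blockIdx N1 N2 x = k ↔
      blockStart N1 N2 k ≤ x ∧ x < blockStart N1 N2 k + blockSize N1 N2 k := by
  obtain ⟨q, r, hr, rfl⟩ : ∃ q r, r < N1 + N2 ∧ x = q * (N1 + N2) + r :=
    ⟨x / (N1 + N2), x % (N1 + N2), Nat.mod_lt x hN, by rw [Nat.mul_comm, Nat.div_add_mod]⟩
  have hdiv : (q * (N1 + N2) + r) / (N1 + N2) = q :=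
    Nat.div_eq_of_lt_le (by omega) (by rw [Nat.add_mul]; omega)
  have hmod : (q * (N1 + N2) + r) % (N1 + N2) = r := by
    rw [Nat.add_comm, Nat.add_mul_mod_self_right, Nat.mod_eq_of_lt hr]
  unfold blockIdx blockStart blockSize
  rw [hdiv, hmod]
  constructor
  · rintro rfl
    have h0 : 2 * q / 2 = q := by omega
    have h1 : (2 * q + 1) / 2 = q := by omega
    split_ifs <;> simp only [add_zero, h0, h1] at * <;> omega
  · rintro ⟨hlo, hhi⟩
    have hq : k / 2 = q :=
      (Nat.div_eq_of_lt_le (by split_ifs at hlo <;> omega)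
        (by rw [Nat.add_mul]; split_ifs at hhi <;> omega)).symm.trans hdiv
    subst hq
    split_ifs at hlo hhi ⊢ <;> omega

theorem blockStart_add_blockSize_le {k : ℕ} (hk : k < 2 * K) :
    blockStart N1 N2 k + blockSize N1 N2 k ≤ K * (N1 + N2) := by
  have hq : (k / 2 + 1) * (N1 + N2) ≤ K * (N1 + N2) := Nat.mul_le_mul_right _ (by omega)
  unfold blockStart blockSize
  rw [Nat.add_mul] at hq
  split_ifs <;> omega

theorem blockIdx_lt {x : ℕ} (hx : x < K * (N1 + N2)) : blockIdx N1 N2 x < 2 * K := by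
  have hq : x / (N1 + N2) < K := Nat.div_lt_of_lt_mul (by rwa [Nat.mul_comm])
  unfold blockIdx
  split_ifs <;> omega

theorem filter_range_blockIdx_eq (hN : 0 < N1 + N2) {n k : ℕ}
    (hk : blockStart N1 N2 k + blockSize N1 N2 k ≤ n) :
    (range n).filter (blockIdx N1 N2 · = k) =
      Ico (blockStart N1 N2 k) (blockStart N1 N2 k + blockSize N1 N2 k) := by
  ext x
  simp only [mem_filter, mem_range, mem_Ico, blockIdx_eq_iff hN]
  omega

theorem sum_range_blockSize {M : Type*} [AddCommMonoid M] (g : ℕ → M) (K : ℕ) :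
    ∑ k ∈ range (2 * K), g (blockSize N1 N2 k) = K • (g N1 + g N2) := by
  induction K with
  | zero => simp
  | succ K ih =>
    have h0 : blockSize N1 N2 (2 * K) = N1 := by simp [blockSize]
    have h1 : blockSize N1 N2 (2 * K + 1) = N2 := by simp [blockSize, Nat.add_mod]
    rw [Nat.mul_succ, sum_range_succ, sum_range_succ, ih, h0, h1, succ_nsmul, add_assoc]

end Blocks

section GraphH

variable {K N1 N2 : ℕ}

def degH (K N1 N2 x : ℕ) : ℕ :=
  (if x + 1 < K * (N1 + N2) then 1 else 0) + (if 1 ≤ x then 1 else 0) +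
    (if x + 2 < K * (N1 + N2) ∧ blockIdx N1 N2 (x + 2) = blockIdx N1 N2 x then 1 else 0) +
    (if 2 ≤ x ∧ blockIdx N1 N2 (x - 2) = blockIdx N1 N2 x then 1 else 0)

theorem deg_graphH (v : Fin (K * (N1 + N2))) :
    deg (graphH K N1 N2) v = degH K N1 N2 v := by
  have hsplit : ∀ w : Fin (K * (N1 + N2)),
      (if (graphH K N1 N2).Adj v w then 1 else 0) =
        (if w.val = v + 1 then 1 else 0) +
        (if w.val = v - 1 then if 1 ≤ v.val then 1 else 0 else 0) +
        (if w.val = v + 2 then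
          if blockIdx N1 N2 (v + 2) = blockIdx N1 N2 v then 1 else 0 else 0) +
        (if w.val = v - 2 then
          if 2 ≤ v.val ∧ blockIdx N1 N2 (v - 2) = blockIdx N1 N2 v then 1 else 0 else 0) := by
    intro w
    by_cases hadj : (graphH K N1 N2).Adj v w
    all_goals
      simp only [hadj, if_true, if_false]
      simp only [graphH] at hadj
      generalize w.val = x at hadj ⊢
      by_cases hx : x = v + 2
      · subst hx
        split_ifs <;> omega
      by_cases hx' : x + 2 = v
      · obtain rfl : x = v - 2 := by omega
        split_ifs <;> omega
      split_ifs <;> omega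
  rw [deg, card_filter, sum_congr rfl fun w _ => hsplit w]
  simp only [sum_add_distrib, sum_fin_ite_val_eq, degH]
  have := v.isLt
  split_ifs <;> omega

theorem degH_blockStart_add (hN : 0 < N1 + N2) {k p : ℕ}
    (hk : blockStart N1 N2 k + blockSize N1 N2 k ≤ K * (N1 + N2)) (hp : p < blockSize N1 N2 k) :
    degH K N1 N2 (blockStart N1 N2 k + p) =
      (if blockStart N1 N2 k + p + 1 < K * (N1 + N2) then 1 else 0) +
        (if 1 ≤ blockStart N1 N2 k + p then 1 else 0) +
        (if p + 2 < blockSize N1 N2 k then 1 else 0) + (if 2 ≤ p then 1 else 0) := by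
  have hx : blockIdx N1 N2 (blockStart N1 N2 k + p) = k := (blockIdx_eq_iff hN).2 (by omega)
  unfold degH
  simp only [hx, blockIdx_eq_iff hN]
  split_ifs <;> omega

theorem clusterDeg_graphH (hN : 0 < N1 + N2) {k : ℕ} (hk : k < 2 * K)
    (hsize : 4 ≤ blockSize N1 N2 k) :
    clusterDeg (graphH K N1 N2) (naturalLabel N1 N2) k + 6 =
      4 * blockSize N1 N2 k + (if 1 ≤ blockStart N1 N2 k then 1 else 0) +
        (if blockStart N1 N2 k + blockSize N1 N2 k < K * (N1 + N2) then 1 else 0) := by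
  have hle := blockStart_add_blockSize_le (N1 := N1) (N2 := N2) hk
  obtain ⟨m, hm⟩ : ∃ m, blockSize N1 N2 k = m + 4 := ⟨_, (Nat.sub_add_cancel hsize).symm⟩
  change clusterDeg _ (fun v : Fin (K * (N1 + N2)) => blockIdx N1 N2 v) k + 6 = _
  rw [clusterDeg_eq_sum_filter_range _ _ _ deg_graphH, filter_range_blockIdx_eq hN hle,
    sum_Ico_eq_sum_range, Nat.add_sub_cancel_left, hm, sum_range_add_four]
  have hinner : ∀ i ∈ range m, degH K N1 N2 (blockStart N1 N2 k + (i + 2)) = 4 := by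
    intro i hi
    rw [mem_range] at hi
    rw [degH_blockStart_add hN hle (by omega)]
    split_ifs <;> omega
  rw [sum_congr rfl hinner, sum_const, card_range, smul_eq_mul,
    degH_blockStart_add hN hle (p := 0) (by omega), degH_blockStart_add hN hle (p := 1) (by omega),
    degH_blockStart_add hN hle (p := m + 2) (by omega),
    degH_blockStart_add hN hle (p := m + 3) (by omega)]
  simp (disch := omega) only [if_pos, if_neg]
  split_ifs <;> omega

theorem two_mul_numEdges_graphH_add_le (hK : 1 ≤ K) (h1 : 4 ≤ N1) (h2 : 4 ≤ N2) :
    2 * numEdges (graphH K N1 N2) + 8 * K + 1 ≤ 4 * (K * (N1 + N2)) := by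
  have hbound : ∀ k ∈ range (2 * K),
      clusterDeg (graphH K N1 N2) (naturalLabel N1 N2) k + 6 + (if k = 0 then 1 else 0) ≤
        4 * blockSize N1 N2 k + 2 := by
    intro k hk
    rw [mem_range] at hk
    have hsize : 4 ≤ blockSize N1 N2 k := by unfold blockSize; split_ifs <;> omega
    rw [clusterDeg_graphH (by omega) hk hsize]
    rcases Nat.eq_zero_or_pos k with rfl | hk0
    · rw [show blockStart N1 N2 0 = 0 by simp [blockStart]]
      split_ifs <;> omega
    · split_ifs <;> omega
  have hsum := sum_le_sum hbound
  rw [← sum_deg_eq_two_mul_numEdges,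
    sum_deg_eq_sum_clusterDeg (c := naturalLabel N1 N2) _ fun v => mem_range.2 (blockIdx_lt v.isLt)]
  simp only [sum_add_distrib, sum_const, card_range, smul_eq_mul, sum_ite_eq', mem_range,
    ← mul_sum, sum_range_blockSize (fun N => N) K] at hsum
  split_ifs at hsum <;> omega

theorem range_subset_image_naturalLabel (h1 : 0 < N1) (h2 : 0 < N2) :
    range (2 * K) ⊆ univ.image (naturalLabel N1 N2 (n := K * (N1 + N2))) := by
  intro k hk
  rw [mem_range] at hk
  have hle := blockStart_add_blockSize_le (N1 := N1) (N2 := N2) hk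
  have hsize : 0 < blockSize N1 N2 k := by unfold blockSize; split_ifs <;> omega
  refine mem_image.2 ⟨⟨blockStart N1 N2 k, by omega⟩, mem_univ _, ?_⟩
  show blockIdx N1 N2 (blockStart N1 N2 k) = k
  exact (blockIdx_eq_iff (by omega)).2 (by omega)

theorem lt_Q0_graphH (hK : 1 ≤ K) (h1 : 4 ≤ N1) (h2 : 4 ≤ N2) :
    K • (((4 * (N1 : ℝ) - 8) / (4 * K * ((N1 : ℝ) + N2 - 2))) ^ 2 +
        ((4 * (N2 : ℝ) - 8) / (4 * K * ((N1 : ℝ) + N2 - 2))) ^ 2) <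
      Q0 (graphH K N1 N2) (naturalLabel N1 N2) := by
  have hsize : ∀ k, 4 ≤ blockSize N1 N2 k := fun k => by unfold blockSize; split_ifs <;> omega
  have hd : ∀ k < 2 * K,
      4 * blockSize N1 N2 k ≤ clusterDeg (graphH K N1 N2) (naturalLabel N1 N2) k + 6 :=
    fun k hk => by have := clusterDeg_graphH (by omega) hk (hsize k); omega
  have hd0 := clusterDeg_le_two_mul_numEdges (graphH K N1 N2) (naturalLabel N1 N2) 0
  set C : ℝ := 4 * K * ((N1 : ℝ) + N2 - 2)
  set m := numEdges (graphH K N1 N2)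
  set d := clusterDeg (graphH K N1 N2) (naturalLabel N1 N2)
  have hmC : (2 * m : ℝ) < C := by
    have : (2 * m + 8 * K + 1 : ℝ) ≤ 4 * (K * (N1 + N2)) := by
      exact_mod_cast two_mul_numEdges_graphH_add_le hK h1 h2
    linarith
  have hm0 : (0 : ℝ) < 2 * m := by
    have := hd 0 (by omega)
    have := hsize 0
    exact_mod_cast (show 0 < 2 * m by omega)
  have hterm : ∀ k ∈ range (2 * K),
      ((4 * (blockSize N1 N2 k : ℝ) - 8) / C) ^ 2 < ((d k : ℝ) / (2 * m)) ^ 2 := by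
    intro k hk
    have hsizeR : (4 : ℝ) ≤ blockSize N1 N2 k := by exact_mod_cast hsize k
    have hdk : 4 * (blockSize N1 N2 k : ℝ) ≤ d k + 6 := by exact_mod_cast hd k (mem_range.1 hk)
    exact pow_lt_pow_left₀ (div_lt_div₀' (by linarith) hmC (by linarith) hm0)
      (div_nonneg (by linarith) (by linarith)) two_ne_zero
  calc K • (((4 * (N1 : ℝ) - 8) / C) ^ 2 + ((4 * (N2 : ℝ) - 8) / C) ^ 2)
      = ∑ k ∈ range (2 * K), ((4 * (blockSize N1 N2 k : ℝ) - 8) / C) ^ 2 :=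
        (sum_range_blockSize (fun N : ℕ => ((4 * (N : ℝ) - 8) / C) ^ 2) K).symm
    _ < ∑ k ∈ range (2 * K), ((d k : ℝ) / (2 * m)) ^ 2 :=
        sum_lt_sum_of_nonempty ⟨0, mem_range.2 (by omega)⟩ hterm
    _ ≤ Q0 (graphH K N1 N2) (naturalLabel N1 N2) :=
        sum_le_sum_of_subset_of_nonneg (range_subset_image_naturalLabel (by omega) (by omega))
          fun _ _ _ => sq_nonneg _

end GraphH

end BadComm

open BadComm

/-- Lemma 4 of the paper: the Newman modularity of the natural
clustering of `H_{K,N₁,N₂}` satisfies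
`Q_N < 1 − K((4N₁−8)² + (4N₂−8)²)/(4K(N₁+N₂−2))²`. -/
theorem statement15 (K N1 N2 : ℕ) (hK : 1 ≤ K) (h1 : 5 ≤ N1) (h2 : 5 ≤ N2) :
    QN (graphH K N1 N2) (naturalLabel N1 N2) <
      1 - (K : ℝ) * ((4 * (N1 : ℝ) - 8) ^ 2 + (4 * (N2 : ℝ) - 8) ^ 2) /
          (4 * (K : ℝ) * ((N1 : ℝ) + (N2 : ℝ) - 2)) ^ 2 := by
  have hQ0 := lt_Q0_graphH hK (by omega : 4 ≤ N1) (by omega : 4 ≤ N2)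
  have hQf := Qf_le_one (graphH K N1 N2) (naturalLabel N1 N2)
  rw [nsmul_eq_mul, div_pow, div_pow, ← add_div, ← mul_div_assoc] at hQ0
  rw [QN]
  linarith
end
end

section
/- Fix an integer K ≥ 1 and for each integer x ≥ 1 set N₁ = 3, J = xK and N₂ = x²K, and let n = K(3 + x²K). Then the number c of unordered node pairs lying in the same cluster under the natural clustering 𝐕_{K,3,x²K} of G_{K,3,x²K} equals c = 3K + K·x²K(x²K − 1)/2 = (1/2)K³x⁴ − (1/2)K²x² + 3K, and the number b of unordered node pairs lying in the same cluster under 𝐔_{K,3,x²K,xK} satisfies b < 4K³x³ + 4K²x² for all sufficiently large x. -/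
open scoped Classical

noncomputable section

open BadComm

open Finset

/-!
Counting pairs cluster by cluster gives `∑ₖ C(|Cₖ|, 2)` same-cluster pairs for a clustering
with clusters `Cₖ`. Both clusterings consist of intervals of consecutive nodes: `𝐕` has `K`
clusters of size `3` and `K` of size `x²K`, while for `x ≥ 4` the clustering `𝐔` has `xK`
clusters of size `xK` and a remainder cluster of size `3K`, so `b = xK·C(xK, 2) + C(3K, 2)`,
which is about `(xK)³/2`.
-/

namespace BadComm

lemma samePairCount_eq_sum_choose {V : Type*} [Fintype V] (c : V → ℕ) {s : Finset ℕ}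
    (hs : ∀ v, c v ∈ s) :
    samePairCount c = ∑ k ∈ s, (#{v | c v = k}).choose 2 := by
  have hpairs : (offDiagPairs V).filter (sameCluster c) =
      s.biUnion fun k => (({v | c v = k} : Finset V).offDiag.image (Function.uncurry Sym2.mk)) := by
    ext p
    induction p using Sym2.ind with
    | _ u w =>
      simp only [offDiagPairs, sameCluster, mem_filter, mem_univ, true_and, mem_biUnion,
        mem_image, mem_offDiag, Sym2.mk_isDiag_iff, Sym2.mem_iff, Prod.exists,
        Function.uncurry_apply_pair, Sym2.eq_iff]
      constructor
      · rintro ⟨huw, hc⟩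
        exact ⟨c u, hs u, u, w, ⟨rfl, (hc u (.inl rfl) w (.inr rfl)).symm, huw⟩,
          .inl ⟨rfl, rfl⟩⟩
      · rintro ⟨k, -, a, b, ⟨ha, hb, hab⟩, ⟨rfl, rfl⟩ | ⟨rfl, rfl⟩⟩ <;> grind
  rw [samePairCount, hpairs, card_biUnion]
  · simp only [Sym2.card_image_offDiag]
  · intro k _ l _ hkl
    simp only [Function.onFun, disjoint_left, mem_image, mem_offDiag, mem_filter, mem_univ,
      true_and]
    rintro _ ⟨⟨u, w⟩, ⟨hu, -⟩, rfl⟩ ⟨⟨u', w'⟩, ⟨hu', hw', -⟩, h⟩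
    rcases Sym2.eq_iff.1 h with ⟨rfl, -⟩ | ⟨-, rfl⟩ <;> simp_all

lemma card_filter_fin_eq_of_iff_Ico {n a b : ℕ} {p : ℕ → Prop} [DecidablePred p]
    (hb : b ≤ n) (hp : ∀ u < n, p u ↔ a ≤ u ∧ u < b) :
    #{v : Fin n | p v} = b - a := by
  rw [← Nat.card_Ico, ← card_map Fin.valEmbedding]
  congr 1
  ext u
  simp only [mem_map, mem_filter, mem_univ, true_and, Fin.valEmbedding_apply, mem_Ico]
  constructor
  · rintro ⟨v, hv, rfl⟩
    exact (hp v v.isLt).1 hv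
  · intro hu
    exact ⟨⟨u, by omega⟩, (hp u (by omega)).2 hu, rfl⟩

lemma div_eq_and_mod_mem_Ico_iff {s a b u q : ℕ} (hs : 0 < s) (hb : b ≤ s) :
    u / s = q ∧ a ≤ u % s ∧ u % s < b ↔ q * s + a ≤ u ∧ u < q * s + b := by
  have hdm := Nat.div_add_mod u s
  constructor
  · rintro ⟨rfl, h⟩
    rw [Nat.mul_comm]
    omega
  · rintro ⟨h1, h2⟩
    have hq : u / s = q := (Nat.div_eq_iff hs).2 ⟨by omega, by omega⟩
    rw [hq, Nat.mul_comm] at hdm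
    omega

lemma blockIdx_eq_two_mul_iff {N1 N2 : ℕ} (h : 0 < N1 + N2) (u q : ℕ) :
    blockIdx N1 N2 u = 2 * q ↔ q * (N1 + N2) ≤ u ∧ u < q * (N1 + N2) + N1 := by
  have := div_eq_and_mod_mem_Ico_iff (a := 0) (u := u) (q := q) h (Nat.le_add_right N1 N2)
  unfold blockIdx
  split_ifs <;> omega

lemma blockIdx_eq_two_mul_add_one_iff {N1 N2 : ℕ} (h : 0 < N1 + N2) (u q : ℕ) :
    blockIdx N1 N2 u = 2 * q + 1 ↔
      q * (N1 + N2) + N1 ≤ u ∧ u < q * (N1 + N2) + (N1 + N2) := by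
  rw [← div_eq_and_mod_mem_Ico_iff h le_rfl, blockIdx]
  have := Nat.mod_lt u h
  split_ifs <;> omega

lemma sum_range_two_mul {M : Type*} [AddCommMonoid M] (f : ℕ → M) (K : ℕ) :
    ∑ k ∈ range (2 * K), f k = ∑ q ∈ range K, (f (2 * q) + f (2 * q + 1)) := by
  induction K with
  | zero => simp
  | succ K ih => rw [Nat.mul_succ, sum_range_succ, sum_range_succ, sum_range_succ, ih, add_assoc]

section naturalLabel

variable {K N1 N2 : ℕ} (h : 0 < N1 + N2)
include h

lemma naturalLabel_lt (v : Fin (K * (N1 + N2))) : naturalLabel N1 N2 v < 2 * K := by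
  have : v.val / (N1 + N2) < K := (Nat.div_lt_iff_lt_mul h).2 v.isLt
  unfold naturalLabel blockIdx
  split_ifs <;> omega

lemma card_naturalLabel_eq_two_mul {q : ℕ} (hq : q < K) :
    #{v : Fin (K * (N1 + N2)) | naturalLabel N1 N2 v = 2 * q} = N1 := by
  have : q * (N1 + N2) + (N1 + N2) ≤ K * (N1 + N2) := by nlinarith
  exact (card_filter_fin_eq_of_iff_Ico (by omega) fun u _ => blockIdx_eq_two_mul_iff h u q).trans
    (by omega)

lemma card_naturalLabel_eq_two_mul_add_one {q : ℕ} (hq : q < K) :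
    #{v : Fin (K * (N1 + N2)) | naturalLabel N1 N2 v = 2 * q + 1} = N2 := by
  have : q * (N1 + N2) + (N1 + N2) ≤ K * (N1 + N2) := by nlinarith
  exact (card_filter_fin_eq_of_iff_Ico this fun u _ => blockIdx_eq_two_mul_add_one_iff h u q).trans
    (by omega)

lemma samePairCount_naturalLabel :
    samePairCount (naturalLabel N1 N2 : Fin (K * (N1 + N2)) → ℕ) =
      K * (N1.choose 2 + N2.choose 2) := by
  rw [samePairCount_eq_sum_choose _ (fun v => mem_range.2 (naturalLabel_lt h v)),
    sum_range_two_mul, sum_congr rfl fun q hq => by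
      rw [card_naturalLabel_eq_two_mul h (mem_range.1 hq),
        card_naturalLabel_eq_two_mul_add_one h (mem_range.1 hq)],
    sum_const, card_range, smul_eq_mul]

end naturalLabel

section uLabel

lemma uLabel_le {n J : ℕ} (v : Fin n) : uLabel J v ≤ J := min_le_right _ _

variable {n J : ℕ} (hL : 0 < n / J)
include hL

lemma card_uLabel_eq_of_lt {k : ℕ} (hk : k < J) :
    #{v : Fin n | uLabel J v = k} = n / J := by
  have : k * (n / J) + n / J ≤ n := by
    have := Nat.div_mul_le_self n J
    nlinarith
  refine (card_filter_fin_eq_of_iff_Ico (p := fun u => min (u / (n / J)) J = k)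
    (a := k * (n / J)) this fun u _ => ?_).trans (by omega)
  have := Nat.div_eq_iff hL (x := u) (y := k)
  omega

lemma card_uLabel_eq_self : #{v : Fin n | uLabel J v = J} = n % J := by
  refine (card_filter_fin_eq_of_iff_Ico (p := fun u => min (u / (n / J)) J = J)
    (a := J * (n / J)) le_rfl fun u hu => ?_).trans ?_
  · have := Nat.le_div_iff_mul_le hL (x := J) (y := u)
    omega
  · have := Nat.div_add_mod n J
    omega

lemma samePairCount_uLabel :
    samePairCount (uLabel J : Fin n → ℕ) = J * (n / J).choose 2 + (n % J).choose 2 := by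
  rw [samePairCount_eq_sum_choose _ (fun v => mem_range.2 (Nat.lt_succ_of_le (uLabel_le v))),
    sum_range_succ, card_uLabel_eq_self hL, sum_congr rfl fun k hk => by
      rw [card_uLabel_eq_of_lt hL (mem_range.1 hk)],
    sum_const, card_range, smul_eq_mul]

end uLabel

end BadComm

/-- with `N₁ = 3`, `J = xK`, `N₂ = x²K`, `n = K(3 + x²K)`: the number `c`
of node pairs in the same cluster under the natural clustering of `G_{K,3,x²K}` equals
`3K + K·x²K(x²K−1)/2 = (1/2)K³x⁴ − (1/2)K²x² + 3K`, and the number `b` of node pairs in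
the same cluster under `𝐔_{K,3,x²K,xK}` satisfies `b < 4K³x³ + 4K²x²` for all
sufficiently large `x`. -/
theorem statement19 (K : ℕ) (hK : 1 ≤ K) :
    (∀ x : ℕ, 1 ≤ x →
      ((samePairCount (naturalLabel 3 (x ^ 2 * K) : Fin (K * (3 + x ^ 2 * K)) → ℕ) : ℝ) =
          3 * (K : ℝ) +
            (K : ℝ) * ((x : ℝ) ^ 2 * (K : ℝ)) * ((x : ℝ) ^ 2 * (K : ℝ) - 1) / 2 ∧
        (samePairCount (naturalLabel 3 (x ^ 2 * K) : Fin (K * (3 + x ^ 2 * K)) → ℕ) : ℝ) =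
          (1 / 2) * (K : ℝ) ^ 3 * (x : ℝ) ^ 4 - (1 / 2) * (K : ℝ) ^ 2 * (x : ℝ) ^ 2
            + 3 * (K : ℝ))) ∧
    (∃ x0 : ℕ, ∀ x : ℕ, x0 ≤ x →
      (samePairCount (uLabel (x * K) : Fin (K * (3 + x ^ 2 * K)) → ℕ) : ℝ) <
        4 * (K : ℝ) ^ 3 * (x : ℝ) ^ 3 + 4 * (K : ℝ) ^ 2 * (x : ℝ) ^ 2) := by
  refine ⟨fun x _ => ?_, 4, fun x hx => ?_⟩
  · rw [samePairCount_naturalLabel (by omega)]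
    push_cast [Nat.cast_choose_two]
    constructor <;> ring
  · have hxK : 3 * K < x * K := by nlinarith
    obtain ⟨hdiv, hmod⟩ : K * (3 + x ^ 2 * K) / (x * K) = x * K ∧
        K * (3 + x ^ 2 * K) % (x * K) = 3 * K :=
      (Nat.div_mod_unique (by omega)).2 ⟨by ring, hxK⟩
    rw [samePairCount_uLabel (by omega), hdiv, hmod]
    have hK' : (1 : ℝ) ≤ K := by exact_mod_cast hK
    have hKx : (K : ℝ) ≤ x * K := by nlinarith [show (4 : ℝ) ≤ x by exact_mod_cast hx]
    push_cast [Nat.cast_choose_two]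
    nlinarith [mul_pos (by linarith : (0 : ℝ) < x * K) (by linarith : (0 : ℝ) < x * K)]
end
end
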